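/- arXiv:1209.3379 — 3 statements merged into one kernel-verified Lean document; each statement's English description precedes it below -/
import Mathlib

section
/- Define μ_n = α n^γ M₁ ‖b_n‖₁ / ‖ψ₀‖₁ and ν_n = α n^γ M₁ ‖b_n‖₁ / ∫ψ₀(ξ)|ξ|²dξ. Then for any h ∈ H and any (t,ξ) ∈ [0,T]×ℝ^d: (i) 0 ≤ d·B^n_h(t) − A^n_h(t) = (α/‖ψ₀‖₁)∫_{ℝ^d} Q^n_−(h,h)(t,ξ)dξ ≤ μ_n M₁; (ii) −(μ_n/2)M₁ ≤ B^n_h(t) ≤ (ν_n/2)M₂; (iii) A^n_h(t) ≥ −(μ_n(d+2)/2)M₁; (iv) 0 ≤ (d+2)B^n_h(t) − A^n_h(t) = (α/∫ψ₀|ξ|²dξ)∫_{ℝ^d}|ξ|² Q^n_−(h,h)(t,ξ)dξ ≤ ν_n M₂. -/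
noncomputable section

open MeasureTheory Real Set Filter

abbrev Vel (d : ℕ) := EuclideanSpace ℝ (Fin d)

/-- Real inner product on `Vel d`. -/
def rinner {d : ℕ} (x y : Vel d) : ℝ := @inner ℝ _ _ x y

/-- The unit sphere of `ℝ^d`. -/
def sphere01 (d : ℕ) : Set (Vel d) := Metric.sphere (0 : Vel d) 1

/-- Surface measure on the unit sphere (restricted `(d-1)`-Hausdorff measure). -/
def sphMeas (d : ℕ) : Measure (Vel d) := (μH[(d : ℝ) - 1]).restrict (sphere01 d)

/-- Surface area of the unit sphere. -/
def sArea (d : ℕ) : ℝ := (sphMeas d Set.univ).toReal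

/-- Post-collisional velocity ξ'. -/
def postV (d : ℕ) (ξ ξs σ : Vel d) : Vel d := (2⁻¹ : ℝ) • (ξ + ξs) + (‖ξ - ξs‖ / 2) • σ

/-- Post-collisional velocity ξ'*. -/
def postVs (d : ℕ) (ξ ξs σ : Vel d) : Vel d := (2⁻¹ : ℝ) • (ξ + ξs) - (‖ξ - ξs‖ / 2) • σ

/-- cos θ = ⟨(ξ−ξ*)/|ξ−ξ*|, σ⟩. -/
def cosAngle (d : ℕ) (ξ ξs σ : Vel d) : ℝ := rinner (‖ξ - ξs‖⁻¹ • (ξ - ξs)) σ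

/-- Hard-potential collision kernel B(ξ−ξ*,σ) = |ξ−ξ*|^γ b(cos θ). -/
def kerFull (d : ℕ) (γ : ℝ) (b : ℝ → ℝ) (ξ ξs σ : Vel d) : ℝ :=
  ‖ξ - ξs‖ ^ γ * b (cosAngle d ξ ξs σ)

/-- Truncated kinetic part Φ_n(r) = (min(r,n))^γ. -/
def Phin (γ : ℝ) (n : ℕ) (r : ℝ) : ℝ := (min r (n : ℝ)) ^ γ

/-- Truncated angular kernel b_n(x) = b(x) 1_{|x| ≤ 1 − 1/n}. -/
def bcut (b : ℝ → ℝ) (n : ℕ) (x : ℝ) : ℝ := if |x| ≤ 1 - 1 / (n : ℝ) then b x else 0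

/-- Truncated collision kernel B_n(ξ−ξ*,σ) = Φ_n(|ξ−ξ*|) b_n(cos θ). -/
def kerTrunc (d : ℕ) (γ : ℝ) (b : ℝ → ℝ) (n : ℕ) (ξ ξs σ : Vel d) : ℝ :=
  Phin γ n ‖ξ - ξs‖ * bcut b n (cosAngle d ξ ξs σ)

/-- Gain part of the collision operator (with kernel K). -/
def Qplus (d : ℕ) (K : Vel d → Vel d → Vel d → ℝ) (f : Vel d → ℝ) (ξ : Vel d) : ℝ :=
  ∫ ξs, (∫ σ, K ξ ξs σ * f (postV d ξ ξs σ) * f (postVs d ξ ξs σ) ∂(sphMeas d))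

/-- L(f)(ξ) = ∫∫ K f(ξ*) dξ*dσ. -/
def Lop (d : ℕ) (K : Vel d → Vel d → Vel d → ℝ) (f : Vel d → ℝ) (ξ : Vel d) : ℝ :=
  ∫ ξs, (∫ σ, K ξ ξs σ * f ξs ∂(sphMeas d))

/-- Loss part Q_−(f,f) = f L(f). -/
def Qminus (d : ℕ) (K : Vel d → Vel d → Vel d → ℝ) (f : Vel d → ℝ) (ξ : Vel d) : ℝ :=
  f ξ * Lop d K f ξ

/-- Ballistic annihilation operator 𝔹(f,f) = (1−α)Q_+ − Q_−. -/
def Bop (d : ℕ) (α : ℝ) (K : Vel d → Vel d → Vel d → ℝ) (f : Vel d → ℝ) (ξ : Vel d) : ℝ :=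
  (1 - α) * Qplus d K f ξ - Qminus d K f ξ

/-- Normalization ∫_{S^{d−1}} b(ê·σ) dσ = 1 for every unit vector ê. -/
def bNormalized (d : ℕ) (b : ℝ → ℝ) : Prop :=
  ∀ e : Vel d, ‖e‖ = 1 → (∫ σ, b (rinner e σ) ∂(sphMeas d)) = 1

/-- A_ψ for mass 1, energy d/2. -/
def Acoef (d : ℕ) (α : ℝ) (K : Vel d → Vel d → Vel d → ℝ) (f : Vel d → ℝ) : ℝ :=
  -(α / 2) * ∫ ξ, ((d : ℝ) + 2 - 2 * ‖ξ‖ ^ 2) * Qminus d K f ξ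

/-- B_ψ for mass 1, energy d/2. -/
def Bcoef (d : ℕ) (α : ℝ) (K : Vel d → Vel d → Vel d → ℝ) (f : Vel d → ℝ) : ℝ :=
  -(α / (2 * (d : ℝ))) * ∫ ξ, ((d : ℝ) - 2 * ‖ξ‖ ^ 2) * Qminus d K f ξ

/-- A^n_h built from mass m0 and energy E0 of the initial datum. -/
def AcoefGen (d : ℕ) (α m0 E0 : ℝ) (K : Vel d → Vel d → Vel d → ℝ) (f : Vel d → ℝ) : ℝ :=
  -(α / 2) * ∫ ξ, (((d : ℝ) + 2) / m0 - (d : ℝ) * ‖ξ‖ ^ 2 / E0) * Qminus d K f ξ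

/-- B^n_h built from mass m0 and energy E0 of the initial datum. -/
def BcoefGen (d : ℕ) (α m0 E0 : ℝ) (K : Vel d → Vel d → Vel d → ℝ) (f : Vel d → ℝ) : ℝ :=
  -(α / 2) * ∫ ξ, (1 / m0 - ‖ξ‖ ^ 2 / E0) * Qminus d K f ξ

/-- the weight ⟨ξ⟩^η. -/
def wgt (d : ℕ) (η : ℝ) (ξ : Vel d) : ℝ := (1 + ‖ξ‖ ^ 2) ^ (η / 2)

/-- f ∈ L¹_η. -/
def MemL1w (d : ℕ) (η : ℝ) (f : Vel d → ℝ) : Prop :=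
  Integrable (fun ξ => |f ξ| * wgt d η ξ)

/-- ‖f‖_{L¹_η}. -/
def L1wNorm (d : ℕ) (η : ℝ) (f : Vel d → ℝ) : ℝ := ∫ ξ, |f ξ| * wgt d η ξ

/-- ψ ∈ C(I; L¹_η). -/
def ContIntoL1w (d : ℕ) (η : ℝ) (I : Set ℝ) (ψ : ℝ → Vel d → ℝ) : Prop :=
  (∀ t ∈ I, MemL1w d η (ψ t)) ∧
  ∀ t ∈ I, Tendsto (fun u => L1wNorm d η (fun ξ => ψ u ξ - ψ t ξ)) (nhdsWithin t I) (nhds 0)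

/-- Weak (test-function) formulation of
∂_tψ + Ac(ψ)ψ + Bc(ψ) ξ·∇ψ = 𝔹(ψ,ψ), ψ(0) = ψ0, for times in I. -/
def IsWeakSolOn (d : ℕ) (α : ℝ) (K : Vel d → Vel d → Vel d → ℝ)
    (Ac Bc : (Vel d → ℝ) → ℝ) (ψ0 : Vel d → ℝ) (ψ : ℝ → Vel d → ℝ) (I : Set ℝ) : Prop :=
  ∀ ρ : Vel d → ℝ, ContDiff ℝ 1 ρ → HasCompactSupport ρ → ∀ t ∈ I,
    (∫ ξ, ψ t ξ * ρ ξ)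
      + (∫ s in (0:ℝ)..t, (Ac (ψ s) - (d : ℝ) * Bc (ψ s)) * ∫ ξ, ρ ξ * ψ s ξ)
    = (∫ s in (0:ℝ)..t, Bc (ψ s) * ∫ ξ, ψ s ξ * rinner ξ (gradient ρ ξ))
      + (∫ ξ, ρ ξ * ψ0 ξ)
      + ∫ s in (0:ℝ)..t, ∫ ξ, Bop d α K (ψ s) ξ * ρ ξ

def IsWeakSol (d : ℕ) (α : ℝ) (K : Vel d → Vel d → Vel d → ℝ)
    (Ac Bc : (Vel d → ℝ) → ℝ) (ψ0 : Vel d → ℝ) (ψ : ℝ → Vel d → ℝ) : Prop :=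
  IsWeakSolOn d α K Ac Bc ψ0 ψ (Ici 0)

/-- Solution of the truncated rescaled annihilation equation with datum ψ0,
conserving the mass and energy of ψ0. -/
def IsTruncSol (d : ℕ) (γ α : ℝ) (b : ℝ → ℝ) (n : ℕ) (ψ0 : Vel d → ℝ)
    (ψ : ℝ → Vel d → ℝ) : Prop :=
  (∀ t ∈ Ici (0:ℝ), ∀ ξ, 0 ≤ ψ t ξ) ∧ ψ 0 = ψ0 ∧
  ContIntoL1w d 0 (Ici 0) ψ ∧
  (∀ t ∈ Ici (0:ℝ), (∫ ξ, ψ t ξ) = ∫ ξ, ψ0 ξ) ∧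
  (∀ t ∈ Ici (0:ℝ), (∫ ξ, ψ t ξ * ‖ξ‖ ^ 2) = ∫ ξ, ψ0 ξ * ‖ξ‖ ^ 2) ∧
  IsWeakSol d α (kerTrunc d γ b n)
    (AcoefGen d α (∫ ξ, ψ0 ξ) (∫ ξ, ψ0 ξ * ‖ξ‖ ^ 2) (kerTrunc d γ b n))
    (BcoefGen d α (∫ ξ, ψ0 ξ) (∫ ξ, ψ0 ξ * ‖ξ‖ ^ 2) (kerTrunc d γ b n)) ψ0 ψ

/-- The solution of the rescaled annihilation equation constructed in the paper:
nonnegative, with the stated regularity, conserving mass 1 and energy d/2. -/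
def IsNiceSol (d : ℕ) (γ α : ℝ) (b : ℝ → ℝ) (ψ0 : Vel d → ℝ) (ψ : ℝ → Vel d → ℝ) : Prop :=
  (∀ t ∈ Ici (0:ℝ), ∀ ξ, 0 ≤ ψ t ξ) ∧ ψ 0 = ψ0 ∧
  ContIntoL1w d 2 (Ici 0) ψ ∧
  (∀ T > (0:ℝ), IntegrableOn (fun t => L1wNorm d (2 + γ) (ψ t)) (Ioc 0 T)) ∧
  (∀ t ∈ Ici (0:ℝ), (∫ ξ, ψ t ξ) = 1) ∧
  (∀ t ∈ Ici (0:ℝ), (∫ ξ, ψ t ξ * ‖ξ‖ ^ 2) = (d : ℝ) / 2) ∧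
  IsWeakSol d α (kerFull d γ b) (Acoef d α (kerFull d γ b)) (Bcoef d α (kerFull d γ b)) ψ0 ψ

/-- ϱ_k computed with the unit vector e. -/
def rhoK (d : ℕ) (e : Vel d) (k : ℝ) : ℝ :=
  (1 / sArea d) * ∫ σ, (((1 + rinner e σ) / 2) ^ k + ((1 - rinner e σ) / 2) ^ k) ∂(sphMeas d)

/-- Generalized binomial coefficient C(k,j) = k(k−1)⋯(k−j+1)/j!. -/
def genBinom (k : ℝ) (j : ℕ) : ℝ := (∏ i ∈ Finset.range j, (k - i)) / (Nat.factorial j)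


/-- Standard hypotheses on the initial datum of the rescaled equation:
nonnegative, in L¹_{2+γ} ∩ L^p, unit mass and energy d/2. -/
def GoodData (d : ℕ) (γ p : ℝ) (ψ0 : Vel d → ℝ) : Prop :=
  (∀ ξ, 0 ≤ ψ0 ξ) ∧ MemL1w d (2 + γ) ψ0 ∧ MemLp ψ0 (ENNReal.ofReal p) volume ∧
  (∫ ξ, ψ0 ξ) = 1 ∧ (∫ ξ, ψ0 ξ * ‖ξ‖ ^ 2) = (d : ℝ) / 2

/-- f is isotropic (radially symmetric). -/
def Isotropic (d : ℕ) (f : Vel d → ℝ) : Prop :=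
  ∀ ξ η : Vel d, ‖ξ‖ = ‖η‖ → f ξ = f η

/-- The set H = H_{T,M₁,M₂,L,C_δ} of nonnegative h ∈ C([0,T];L¹) with the stated
moment and W^{1,∞} bounds. -/
def memH (d : ℕ) (δ T M1 M2 Cδ L : ℝ) (h : ℝ → Vel d → ℝ) : Prop :=
  (∀ t ∈ Icc (0:ℝ) T, ∀ ξ, 0 ≤ h t ξ) ∧
  ContIntoL1w d 0 (Icc 0 T) h ∧
  (∀ t ∈ Icc (0:ℝ) T, (∫ ξ, h t ξ) ≤ M1) ∧
  (∀ t ∈ Icc (0:ℝ) T, (∫ ξ, h t ξ * ‖ξ‖ ^ 2) ≤ M2) ∧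
  (∀ t ∈ Icc (0:ℝ) T, (∫ ξ, h t ξ * ‖ξ‖ ^ (2 + δ)) ≤ Cδ) ∧
  (∀ t ∈ Icc (0:ℝ) T, (∀ ξ, |h t ξ| ≤ L) ∧ LipschitzWith (Real.toNNReal L) (h t)) ∧
  (∀ t ∈ Icc (0:ℝ) T, Integrable (fun ξ => |h t ξ| * (1 + ‖ξ‖ ^ (2 + δ))))

/-!
The angular integral of `b_n(cos θ)` is `‖b_n‖₁` whatever the direction of `ξ - ξ*`, so
`L(h)(ξ) = ‖b_n‖₁ ∫ Φ_n(|ξ - ξ*|) h(ξ*) dξ* ≤ n^γ ‖b_n‖₁ M₁` and `0 ≤ Q_-(h,h) ≤ n^γ ‖b_n‖₁ M₁ h`.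
Hence the mass and energy of `Q_-(h,h)` are at most `n^γ ‖b_n‖₁ M₁` times `M₁` and `M₂`. Both drift
coefficients are linear combinations of these two moments, and `dB - A`, `(d + 2)B - A` isolate
them; the remaining bounds are linear arithmetic.
-/

section Truncation

variable {n : ℕ} {γ : ℝ}

lemma bcut_nonneg {b : ℝ → ℝ} (hb : ∀ x, 0 ≤ b x) (x : ℝ) : 0 ≤ bcut b n x := by
  unfold bcut
  split_ifs
  exacts [hb x, le_rfl]

lemma Phin_nonneg {r : ℝ} (hr : 0 ≤ r) : 0 ≤ Phin γ n r :=
  Real.rpow_nonneg (le_min hr n.cast_nonneg) γ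

lemma Phin_le_natCast_rpow (hγ : 0 ≤ γ) {r : ℝ} (hr : 0 ≤ r) : Phin γ n r ≤ (n : ℝ) ^ γ :=
  Real.rpow_le_rpow (le_min hr n.cast_nonneg) (min_le_right _ _) hγ

lemma Phin_zero (hγ : γ ≠ 0) : Phin γ n 0 = 0 := by
  rw [Phin, min_eq_left n.cast_nonneg, Real.zero_rpow hγ]

end Truncation

lemma integral_le_const_mul_integral {α : Type*} [MeasurableSpace α] {μ : Measure α}
    {q f : α → ℝ} {C : ℝ} (hq : ∀ x, 0 ≤ q x) (hqf : ∀ x, q x ≤ C * f x) (hf : Integrable f μ) :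
    ∫ x, q x ∂μ ≤ C * ∫ x, f x ∂μ := by
  rw [← integral_const_mul]
  exact integral_mono_of_nonneg (Eventually.of_forall hq) (hf.const_mul C) (Eventually.of_forall hqf)

section LossTerm

variable {d n : ℕ} {γ : ℝ} {b : ℝ → ℝ} {nbn : ℝ}

/-- `nbn` plays the role of `‖b_n‖₁`. -/
def HasAngularNorm (d : ℕ) (b : ℝ → ℝ) (n : ℕ) (nbn : ℝ) : Prop :=
  ∀ u : Vel d, ‖u‖ = 1 → nbn = ∫ σ, bcut b n (rinner u σ) ∂(sphMeas d)

/-- Whatever the direction of `ξ - ξs`, the angular part integrates to `nbn`; at `ξ = ξs`, where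
`cosAngle` is a junk value, the factor `Φ_n(0) = 0` kills it. -/
lemma integral_kerTrunc_sphMeas (hγ : γ ≠ 0)
    (hnbn : HasAngularNorm d b n nbn)
    (ξ ξs : Vel d) :
    ∫ σ, kerTrunc d γ b n ξ ξs σ ∂(sphMeas d) = Phin γ n ‖ξ - ξs‖ * nbn := by
  simp only [kerTrunc, integral_const_mul]
  rcases eq_or_ne ξ ξs with rfl | hne
  · simp [Phin_zero hγ]
  · have hunit : ‖(‖ξ - ξs‖⁻¹ • (ξ - ξs) : Vel d)‖ = 1 :=
      norm_smul_inv_norm (sub_ne_zero.2 hne)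
    rw [hnbn _ hunit]
    rfl

lemma Lop_kerTrunc_eq (hγ : γ ≠ 0)
    (hnbn : HasAngularNorm d b n nbn)
    (f : Vel d → ℝ) (ξ : Vel d) :
    Lop d (kerTrunc d γ b n) f ξ = ∫ ξs, Phin γ n ‖ξ - ξs‖ * nbn * f ξs := by
  simp only [Lop, integral_mul_const, integral_kerTrunc_sphMeas hγ hnbn]

variable {f : Vel d → ℝ}

lemma Lop_kerTrunc_nonneg (hγ : γ ≠ 0)
    (hnbn : HasAngularNorm d b n nbn)
    (hnbn0 : 0 ≤ nbn) (hf : ∀ ξ, 0 ≤ f ξ) (ξ : Vel d) :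
    0 ≤ Lop d (kerTrunc d γ b n) f ξ := by
  rw [Lop_kerTrunc_eq hγ hnbn]
  exact integral_nonneg fun ξs => mul_nonneg (mul_nonneg (Phin_nonneg (norm_nonneg _)) hnbn0) (hf ξs)

lemma Lop_kerTrunc_le (hγ : 0 < γ)
    (hnbn : HasAngularNorm d b n nbn)
    (hnbn0 : 0 ≤ nbn) (hf : ∀ ξ, 0 ≤ f ξ) (hfi : Integrable f) {M : ℝ} (hM : ∫ ξ, f ξ ≤ M)
    (ξ : Vel d) : Lop d (kerTrunc d γ b n) f ξ ≤ (n : ℝ) ^ γ * nbn * M := by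
  have hCn : 0 ≤ (n : ℝ) ^ γ * nbn := mul_nonneg (Real.rpow_nonneg n.cast_nonneg γ) hnbn0
  calc Lop d (kerTrunc d γ b n) f ξ = ∫ ξs, Phin γ n ‖ξ - ξs‖ * nbn * f ξs :=
        Lop_kerTrunc_eq hγ.ne' hnbn f ξ
    _ ≤ ∫ ξs, (n : ℝ) ^ γ * nbn * f ξs := by
        refine integral_mono_of_nonneg (Eventually.of_forall fun ξs => ?_) (hfi.const_mul _)
          (Eventually.of_forall fun ξs => ?_)
        · exact mul_nonneg (mul_nonneg (Phin_nonneg (norm_nonneg _)) hnbn0) (hf ξs)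
        · exact mul_le_mul_of_nonneg_right
            (mul_le_mul_of_nonneg_right (Phin_le_natCast_rpow hγ.le (norm_nonneg _)) hnbn0) (hf ξs)
    _ ≤ (n : ℝ) ^ γ * nbn * M := by
        rw [integral_const_mul]
        exact mul_le_mul_of_nonneg_left hM hCn

lemma Qminus_kerTrunc_nonneg (hγ : γ ≠ 0)
    (hnbn : HasAngularNorm d b n nbn)
    (hnbn0 : 0 ≤ nbn) (hf : ∀ ξ, 0 ≤ f ξ) (ξ : Vel d) :
    0 ≤ Qminus d (kerTrunc d γ b n) f ξ :=
  mul_nonneg (hf ξ) (Lop_kerTrunc_nonneg hγ hnbn hnbn0 hf ξ)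

lemma Qminus_kerTrunc_le (hγ : 0 < γ)
    (hnbn : HasAngularNorm d b n nbn)
    (hnbn0 : 0 ≤ nbn) (hf : ∀ ξ, 0 ≤ f ξ) (hfi : Integrable f) {M : ℝ} (hM : ∫ ξ, f ξ ≤ M)
    (ξ : Vel d) : Qminus d (kerTrunc d γ b n) f ξ ≤ ((n : ℝ) ^ γ * nbn * M) * f ξ := by
  rw [Qminus, mul_comm _ (f ξ)]
  exact mul_le_mul_of_nonneg_left (Lop_kerTrunc_le hγ hnbn hnbn0 hf hfi hM ξ) (hf ξ)

lemma integral_Qminus_kerTrunc_le (hγ : 0 < γ)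
    (hnbn : HasAngularNorm d b n nbn)
    (hnbn0 : 0 ≤ nbn) (hf : ∀ ξ, 0 ≤ f ξ) (hfi : Integrable f) {M : ℝ} (hM : ∫ ξ, f ξ ≤ M) :
    ∫ ξ, Qminus d (kerTrunc d γ b n) f ξ ≤ (n : ℝ) ^ γ * nbn * M * M := by
  have hM₀ : 0 ≤ M := (integral_nonneg hf).trans hM
  refine (integral_le_const_mul_integral (Qminus_kerTrunc_nonneg hγ.ne' hnbn hnbn0 hf)
    (Qminus_kerTrunc_le hγ hnbn hnbn0 hf hfi hM) hfi).trans ?_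
  gcongr

lemma integral_norm_sq_mul_Qminus_kerTrunc_le (hγ : 0 < γ)
    (hnbn : HasAngularNorm d b n nbn)
    (hnbn0 : 0 ≤ nbn) (hf : ∀ ξ, 0 ≤ f ξ) (hfi : Integrable f) {M : ℝ} (hM : ∫ ξ, f ξ ≤ M)
    (hfi₂ : Integrable fun ξ => f ξ * ‖ξ‖ ^ 2) {M' : ℝ} (hM' : ∫ ξ, f ξ * ‖ξ‖ ^ 2 ≤ M') :
    ∫ ξ, ‖ξ‖ ^ 2 * Qminus d (kerTrunc d γ b n) f ξ ≤ (n : ℝ) ^ γ * nbn * M * M' := by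
  have hM₀ : 0 ≤ M := (integral_nonneg hf).trans hM
  have hQ : ∀ ξ, ‖ξ‖ ^ 2 * Qminus d (kerTrunc d γ b n) f ξ
      ≤ (n : ℝ) ^ γ * nbn * M * (f ξ * ‖ξ‖ ^ 2) := fun ξ => by
    calc ‖ξ‖ ^ 2 * Qminus d (kerTrunc d γ b n) f ξ
        ≤ ‖ξ‖ ^ 2 * (((n : ℝ) ^ γ * nbn * M) * f ξ) := by
          gcongr
          exact Qminus_kerTrunc_le hγ hnbn hnbn0 hf hfi hM ξ
      _ = (n : ℝ) ^ γ * nbn * M * (f ξ * ‖ξ‖ ^ 2) := by ring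
  refine (integral_le_const_mul_integral
    (fun ξ => mul_nonneg (sq_nonneg _) (Qminus_kerTrunc_nonneg hγ.ne' hnbn hnbn0 hf ξ))
    hQ hfi₂).trans ?_
  gcongr

end LossTerm

lemma integral_sub_mul_norm_sq_mul {E : Type*} [NormedAddCommGroup E] [MeasurableSpace E]
    {μ : Measure E} {q : E → ℝ} (hq : Integrable q μ) (hq2 : Integrable (fun x => ‖x‖ ^ 2 * q x) μ)
    (c₁ c₂ : ℝ) :
    ∫ x, (c₁ - c₂ * ‖x‖ ^ 2) * q x ∂μ = c₁ * (∫ x, q x ∂μ) - c₂ * ∫ x, ‖x‖ ^ 2 * q x ∂μ := by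
  simp_rw [sub_mul, mul_assoc]
  rw [integral_sub (hq.const_mul c₁) (hq2.const_mul c₂), integral_const_mul, integral_const_mul]

section DriftCoefficients

variable {d : ℕ} {α m0 E0 : ℝ} {K : Vel d → Vel d → Vel d → ℝ} {f : Vel d → ℝ}

lemma AcoefGen_eq (hq : Integrable (Qminus d K f))
    (hq2 : Integrable fun ξ => ‖ξ‖ ^ 2 * Qminus d K f ξ) :
    AcoefGen d α m0 E0 K f = -(α / 2) * (((d : ℝ) + 2) / m0 * (∫ ξ, Qminus d K f ξ)
      - (d : ℝ) / E0 * ∫ ξ, ‖ξ‖ ^ 2 * Qminus d K f ξ) := by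
  rw [AcoefGen, ← integral_sub_mul_norm_sq_mul hq hq2]
  congr 2 with ξ
  ring

lemma BcoefGen_eq (hq : Integrable (Qminus d K f))
    (hq2 : Integrable fun ξ => ‖ξ‖ ^ 2 * Qminus d K f ξ) :
    BcoefGen d α m0 E0 K f = -(α / 2) * (1 / m0 * (∫ ξ, Qminus d K f ξ)
      - 1 / E0 * ∫ ξ, ‖ξ‖ ^ 2 * Qminus d K f ξ) := by
  rw [BcoefGen, ← integral_sub_mul_norm_sq_mul hq hq2]
  congr 2 with ξ
  ring

lemma natCast_mul_BcoefGen_sub_AcoefGen (hq : Integrable (Qminus d K f))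
    (hq2 : Integrable fun ξ => ‖ξ‖ ^ 2 * Qminus d K f ξ) :
    (d : ℝ) * BcoefGen d α m0 E0 K f - AcoefGen d α m0 E0 K f
      = α / m0 * ∫ ξ, Qminus d K f ξ := by
  rw [AcoefGen_eq hq hq2, BcoefGen_eq hq hq2]
  ring

lemma natCast_add_two_mul_BcoefGen_sub_AcoefGen (hq : Integrable (Qminus d K f))
    (hq2 : Integrable fun ξ => ‖ξ‖ ^ 2 * Qminus d K f ξ) :
    ((d : ℝ) + 2) * BcoefGen d α m0 E0 K f - AcoefGen d α m0 E0 K f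
      = α / E0 * ∫ ξ, ‖ξ‖ ^ 2 * Qminus d K f ξ := by
  rw [AcoefGen_eq hq hq2, BcoefGen_eq hq hq2]
  ring

end DriftCoefficients

/-- `2B` and `A` are recovered from `y = dB - A` and `x = (d + 2)B - A` as `x - y` and
`(d x - (d + 2) y) / 2`. -/
lemma drift_bounds_of_combination_bounds {d A B μ M ν N : ℝ} (hd : 0 ≤ d)
    (hy₀ : 0 ≤ d * B - A) (hy : d * B - A ≤ μ * M)
    (hx₀ : 0 ≤ (d + 2) * B - A) (hx : (d + 2) * B - A ≤ ν * N) :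
    (-(μ / 2) * M ≤ B ∧ B ≤ (ν / 2) * N) ∧ -(μ * (d + 2) / 2) * M ≤ A := by
  exact ⟨⟨by linarith, by linarith⟩, by nlinarith [mul_nonneg hd hx₀]⟩

lemma sq_le_one_add_rpow {r p : ℝ} (hr : 0 ≤ r) (hp : 2 ≤ p) : r ^ 2 ≤ 1 + r ^ p := by
  rcases le_total r 1 with hr1 | hr1
  · linarith [pow_le_one₀ hr hr1 (n := 2), Real.rpow_nonneg hr p]
  · rw [← Real.rpow_natCast]
    linarith [Real.rpow_le_rpow_of_exponent_le hr1 (show ((2 : ℕ) : ℝ) ≤ p by exact_mod_cast hp)]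

section MemH

variable {d : ℕ} {δ T M1 M2 Cδ L t : ℝ} {h : ℝ → Vel d → ℝ}

lemma memH.integrable (hmem : memH d δ T M1 M2 Cδ L h) (ht : t ∈ Icc 0 T) :
    Integrable (h t) := by
  refine (hmem.2.1.1 t ht).congr (Eventually.of_forall fun ξ => ?_)
  simp [wgt, abs_of_nonneg (hmem.1 t ht ξ)]

lemma memH.integrable_mul_norm_sq (hmem : memH d δ T M1 M2 Cδ L h) (hδ : 0 ≤ δ)
    (ht : t ∈ Icc 0 T) : Integrable fun ξ => h t ξ * ‖ξ‖ ^ 2 := by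
  refine (hmem.2.2.2.2.2.2 t ht).mono'
    ((hmem.integrable ht).aestronglyMeasurable.mul (by fun_prop))
    (Eventually.of_forall fun ξ => ?_)
  rw [Real.norm_eq_abs, abs_mul, abs_of_nonneg (by positivity : (0 : ℝ) ≤ ‖ξ‖ ^ 2)]
  exact mul_le_mul_of_nonneg_left (sq_le_one_add_rpow (norm_nonneg ξ) (by linarith))
    (abs_nonneg _)

end MemH

theorem drift_coefficient_bounds_general
    (d n : ℕ) (γ α δ : ℝ)
    (hγ : 0 < γ ∧ γ ≤ 1) (hα : 0 < α ∧ α < 1) (hδ : 0 < δ)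
    (b : ℝ → ℝ) (hbnonneg : ∀ x, 0 ≤ b x)
    (m0 E0 : ℝ)
    (hm0pos : 0 < m0) (hE0pos : 0 < E0)
    (e : Vel d) (he : ‖e‖ = 1)
    -- ‖b_n‖₁ = ∫_{S^{d−1}} b_n(ê·σ) dσ
    (nbn : ℝ) (hnbn : ∀ u : Vel d, ‖u‖ = 1 → nbn = ∫ σ, bcut b n (rinner u σ) ∂(sphMeas d))
    (T M1 M2 Cδ L : ℝ)
    (μn νn : ℝ)
    (hμn : μn = α * (n : ℝ) ^ γ * M1 * nbn / m0)
    (hνn : νn = α * (n : ℝ) ^ γ * M1 * nbn / E0)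
    (h : ℝ → Vel d → ℝ) (hmem : memH d δ T M1 M2 Cδ L h)
    (hint0 : ∀ t ∈ Icc (0:ℝ) T, Integrable (fun ξ => Qminus d (kerTrunc d γ b n) (h t) ξ))
    (hint2 : ∀ t ∈ Icc (0:ℝ) T,
      Integrable (fun ξ => ‖ξ‖ ^ 2 * Qminus d (kerTrunc d γ b n) (h t) ξ)) :
    ∀ t ∈ Icc (0:ℝ) T, ∀ ξ : Vel d, ∀ A B : ℝ,
      A = AcoefGen d α m0 E0 (kerTrunc d γ b n) (h t) →
      B = BcoefGen d α m0 E0 (kerTrunc d γ b n) (h t) →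
      -- (i)
      (0 ≤ (d : ℝ) * B - A ∧
        (d : ℝ) * B - A = (α / m0) * ∫ ζ, Qminus d (kerTrunc d γ b n) (h t) ζ ∧
        (d : ℝ) * B - A ≤ μn * M1) ∧
      -- (ii)
      (-(μn / 2) * M1 ≤ B ∧ B ≤ (νn / 2) * M2) ∧
      -- (iii)
      (-(μn * ((d : ℝ) + 2) / 2) * M1 ≤ A) ∧
      -- (iv)
      (0 ≤ ((d : ℝ) + 2) * B - A ∧
        ((d : ℝ) + 2) * B - A
          = (α / E0) * ∫ ζ, ‖ζ‖ ^ 2 * Qminus d (kerTrunc d γ b n) (h t) ζ ∧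
        ((d : ℝ) + 2) * B - A ≤ νn * M2) := by
  obtain ⟨hγ₀, -⟩ := hγ
  obtain ⟨hα₀, -⟩ := hα
  intro t ht _ A B hA hB
  have hfi := hmem.integrable ht
  have hfi₂ := hmem.integrable_mul_norm_sq hδ.le ht
  obtain ⟨hh, -, hmass, henergy, -⟩ := hmem
  have hnbn0 : 0 ≤ nbn := hnbn e he ▸ integral_nonneg fun σ => bcut_nonneg hbnonneg _
  set Q := Qminus d (kerTrunc d γ b n) (h t)
  have hQ₀ : ∀ ξ, 0 ≤ Q ξ := Qminus_kerTrunc_nonneg hγ₀.ne' hnbn hnbn0 (hh t ht)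
  have hI₀ : ∫ ξ, Q ξ ≤ (n : ℝ) ^ γ * nbn * M1 * M1 :=
    integral_Qminus_kerTrunc_le hγ₀ hnbn hnbn0 (hh t ht) hfi (hmass t ht)
  have hI₂ : ∫ ξ, ‖ξ‖ ^ 2 * Q ξ ≤ (n : ℝ) ^ γ * nbn * M1 * M2 :=
    integral_norm_sq_mul_Qminus_kerTrunc_le hγ₀ hnbn hnbn0 (hh t ht) hfi
      (hmass t ht) hfi₂ (henergy t ht)
  have hy : (d : ℝ) * B - A = α / m0 * ∫ ξ, Q ξ :=
    hA ▸ hB ▸ natCast_mul_BcoefGen_sub_AcoefGen (hint0 t ht) (hint2 t ht)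
  have hx : ((d : ℝ) + 2) * B - A = α / E0 * ∫ ξ, ‖ξ‖ ^ 2 * Q ξ :=
    hA ▸ hB ▸ natCast_add_two_mul_BcoefGen_sub_AcoefGen (hint0 t ht) (hint2 t ht)
  have hy₀ : 0 ≤ (d : ℝ) * B - A := hy ▸ mul_nonneg (by positivity) (integral_nonneg hQ₀)
  have hx₀ : 0 ≤ ((d : ℝ) + 2) * B - A :=
    hx ▸ mul_nonneg (by positivity) (integral_nonneg fun ξ => mul_nonneg (sq_nonneg _) (hQ₀ ξ))
  have hyM : (d : ℝ) * B - A ≤ μn * M1 := by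
    rw [hy, hμn]
    calc α / m0 * ∫ ξ, Q ξ ≤ α / m0 * ((n : ℝ) ^ γ * nbn * M1 * M1) := by gcongr
      _ = _ := by ring
  have hxN : ((d : ℝ) + 2) * B - A ≤ νn * M2 := by
    rw [hx, hνn]
    calc α / E0 * ∫ ξ, ‖ξ‖ ^ 2 * Q ξ ≤ α / E0 * ((n : ℝ) ^ γ * nbn * M1 * M2) := by gcongr
      _ = _ := by ring
  obtain ⟨hB, hA⟩ := drift_bounds_of_combination_bounds d.cast_nonneg hy₀ hyM hx₀ hxN
  exact ⟨⟨hy₀, hy, hyM⟩, hB, hA, hx₀, hx, hxN⟩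

/-- **Lemma (bounds on the drift coefficients A^n_h, B^n_h for h ∈ H).** -/
theorem drift_coefficient_bounds
    (d n : ℕ) (hd : 2 ≤ d) (hn : 1 ≤ n) (γ α δ : ℝ)
    (hγ : 0 < γ ∧ γ ≤ 1) (hα : 0 < α ∧ α < 1) (hδ : 0 < δ)
    (b : ℝ → ℝ) (hbnonneg : ∀ x, 0 ≤ b x) (hbnorm : bNormalized d b)
    (ψ0 : Vel d → ℝ) (hψ0nonneg : ∀ ξ, 0 ≤ ψ0 ξ)
    (hψ0W : ∃ L0 : NNReal, (∀ ξ, |ψ0 ξ| ≤ L0) ∧ LipschitzWith L0 ψ0)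
    (hψ0mom : MemL1w d (2 + δ) ψ0)
    (m0 E0 : ℝ) (hm0 : m0 = ∫ ξ, ψ0 ξ) (hE0 : E0 = ∫ ξ, ψ0 ξ * ‖ξ‖ ^ 2)
    (hm0pos : 0 < m0) (hE0pos : 0 < E0)
    (e : Vel d) (he : ‖e‖ = 1)
    -- ‖b_n‖₁ = ∫_{S^{d−1}} b_n(ê·σ) dσ
    (nbn : ℝ) (hnbn : ∀ u : Vel d, ‖u‖ = 1 → nbn = ∫ σ, bcut b n (rinner u σ) ∂(sphMeas d))
    (T M1 M2 Cδ L : ℝ)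
    (hT : 0 < T) (hM1 : 0 < M1) (hM2 : 0 < M2) (hCδ : 0 < Cδ) (hL : 0 < L)
    (μn νn : ℝ)
    (hμn : μn = α * (n : ℝ) ^ γ * M1 * nbn / m0)
    (hνn : νn = α * (n : ℝ) ^ γ * M1 * nbn / E0)
    (h : ℝ → Vel d → ℝ) (hmem : memH d δ T M1 M2 Cδ L h)
    (hint0 : ∀ t ∈ Icc (0:ℝ) T, Integrable (fun ξ => Qminus d (kerTrunc d γ b n) (h t) ξ))
    (hint2 : ∀ t ∈ Icc (0:ℝ) T,
      Integrable (fun ξ => ‖ξ‖ ^ 2 * Qminus d (kerTrunc d γ b n) (h t) ξ)) :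
    ∀ t ∈ Icc (0:ℝ) T, ∀ ξ : Vel d, ∀ A B : ℝ,
      A = AcoefGen d α m0 E0 (kerTrunc d γ b n) (h t) →
      B = BcoefGen d α m0 E0 (kerTrunc d γ b n) (h t) →
      -- (i)
      (0 ≤ (d : ℝ) * B - A ∧
        (d : ℝ) * B - A = (α / m0) * ∫ ζ, Qminus d (kerTrunc d γ b n) (h t) ζ ∧
        (d : ℝ) * B - A ≤ μn * M1) ∧
      -- (ii)
      (-(μn / 2) * M1 ≤ B ∧ B ≤ (νn / 2) * M2) ∧
      -- (iii)
      (-(μn * ((d : ℝ) + 2) / 2) * M1 ≤ A) ∧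
      -- (iv)
      (0 ≤ ((d : ℝ) + 2) * B - A ∧
        ((d : ℝ) + 2) * B - A
          = (α / E0) * ∫ ζ, ‖ζ‖ ^ 2 * Qminus d (kerTrunc d γ b n) (h t) ζ ∧
        ((d : ℝ) + 2) * B - A ≤ νn * M2) :=
  drift_coefficient_bounds_general d n γ α δ hγ hα hδ b hbnonneg m0 E0 hm0pos hE0pos e he nbn hnbn T
    M1 M2 Cδ L μn νn hμn hνn h hmem hint0 hint2
end
end

section
/- Let Φ : ℝ → ℝ be convex and let ξ, ξ* ∈ ℝ^d with ξ ≠ ξ* and ξ + ξ* ≠ 0. Set E = |ξ|² + |ξ*|², û = (ξ−ξ*)/|ξ−ξ*| and Û = (ξ+ξ*)/|ξ+ξ*|. Then G_Φ(ξ,ξ*) := (1/2)∫_{S^{d−1}} [Φ(|ξ'|²) + Φ(|ξ'*|²)] b(û·σ) dσ ≤ (1/2)∫_{S^{d−1}} [Φ(E(1 + Û·σ)/2) + Φ(E(1 − Û·σ)/2)] b(û·σ) dσ. -/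
noncomputable section

open MeasureTheory Real Set Filter

open scoped InnerProductSpace

/-! With `m = E/2`, the post-collisional energies are `m ± (|ξ - ξ*|/2) (ξ + ξ*)·σ`, and the
bound's arguments are `m ± (E/2) Û·σ`. Since `|ξ - ξ*| |ξ + ξ*| ≤ E` (parallelogram law and AM-GM),
the first spread is the smaller one, and for convex `Φ` the map `t ↦ Φ(m + t) + Φ(m - t)` is
convex and even, hence nondecreasing in `|t|`. Integrating against `b ≥ 0` gives the bound. -/

theorem ConvexOn.add_sub_le_add_sub_of_abs_le {Φ : ℝ → ℝ} (hΦ : ConvexOn ℝ univ Φ) (m : ℝ)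
    {t T : ℝ} (h : |t| ≤ |T|) : Φ (m + t) + Φ (m - t) ≤ Φ (m + T) + Φ (m - T) := by
  set g : ℝ → ℝ := fun s => Φ (m + s) + Φ (m - s) with hg_def
  have hg : ConvexOn ℝ univ g := by
    have h₁ : ConvexOn ℝ univ fun s => Φ (m + s) := hΦ.translate_right m
    have h₂ : ConvexOn ℝ univ fun s => Φ (m - s) := by
      simp_rw [sub_eq_add_neg]; exact h₁.comp_linearMap (-LinearMap.id)
    exact h₁.add h₂
  have hg_even : ∀ s, g (-s) = g s := fun s => by
    simp only [hg_def, sub_neg_eq_add, ← sub_eq_add_neg]; ring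
  have ht : t ∈ segment ℝ (-|T|) |T| := by
    rw [segment_eq_Icc (by simp)]; exact abs_le.mp h
  calc g t ≤ max (g (-|T|)) (g |T|) := hg.le_on_segment trivial trivial ht
    _ = g T := by
      rw [hg_even, max_self]; rcases abs_choice T with hT | hT <;> rw [hT]; exact hg_even T

theorem norm_sub_mul_norm_add_le {E : Type*} [NormedAddCommGroup E] [InnerProductSpace ℝ E]
    (x y : E) :
    ‖x - y‖ * ‖x + y‖ ≤ ‖x‖ ^ 2 + ‖y‖ ^ 2 := by
  nlinarith [parallelogram_law_with_norm ℝ x y, sq_nonneg (‖x + y‖ - ‖x - y‖)]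

theorem abs_inner_mul_norm_sub_le {E : Type*} [NormedAddCommGroup E] [InnerProductSpace ℝ E]
    (x y σ : E) :
    ‖x - y‖ * |⟪x + y, σ⟫_ℝ| ≤ (‖x‖ ^ 2 + ‖y‖ ^ 2) * |⟪‖x + y‖⁻¹ • (x + y), σ⟫_ℝ| := by
  rcases eq_or_ne (x + y) 0 with hxy | hxy
  · simp [hxy]
  have hpos : 0 < ‖x + y‖ := norm_pos_iff.mpr hxy
  have hle : ‖x - y‖ ≤ (‖x‖ ^ 2 + ‖y‖ ^ 2) * ‖x + y‖⁻¹ := by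
    rw [← div_eq_mul_inv, le_div_iff₀ hpos]; exact norm_sub_mul_norm_add_le x y
  rw [real_inner_smul_left, abs_mul, abs_inv, abs_norm, ← mul_assoc]
  exact mul_le_mul_of_nonneg_right hle (abs_nonneg _)

theorem norm_postV_sq {d : ℕ} (ξ ξs σ : Vel d) (hσ : ‖σ‖ = 1) :
    ‖postV d ξ ξs σ‖ ^ 2 = (‖ξ‖ ^ 2 + ‖ξs‖ ^ 2) / 2 + ‖ξ - ξs‖ / 2 * rinner (ξ + ξs) σ := by
  rw [postV, norm_add_sq_real, real_inner_smul_left, real_inner_smul_right, norm_smul, norm_smul,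
    hσ, Real.norm_of_nonneg (by norm_num), Real.norm_of_nonneg (by positivity), rinner]
  nlinarith [parallelogram_law_with_norm ℝ ξ ξs]

theorem norm_postVs_sq {d : ℕ} (ξ ξs σ : Vel d) (hσ : ‖σ‖ = 1) :
    ‖postVs d ξ ξs σ‖ ^ 2 = (‖ξ‖ ^ 2 + ‖ξs‖ ^ 2) / 2 - ‖ξ - ξs‖ / 2 * rinner (ξ + ξs) σ := by
  rw [postVs, norm_sub_sq_real, real_inner_smul_left, real_inner_smul_right, norm_smul, norm_smul,
    hσ, Real.norm_of_nonneg (by norm_num), Real.norm_of_nonneg (by positivity), rinner]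
  nlinarith [parallelogram_law_with_norm ℝ ξ ξs]

theorem povzner_integrand_le {d : ℕ} {Φ : ℝ → ℝ} (hΦ : ConvexOn ℝ univ Φ) (ξ ξs σ : Vel d)
    (hσ : ‖σ‖ = 1) :
    Φ (‖postV d ξ ξs σ‖ ^ 2) + Φ (‖postVs d ξ ξs σ‖ ^ 2) ≤
      Φ ((‖ξ‖ ^ 2 + ‖ξs‖ ^ 2) * (1 + rinner (‖ξ + ξs‖⁻¹ • (ξ + ξs)) σ) / 2) +
        Φ ((‖ξ‖ ^ 2 + ‖ξs‖ ^ 2) * (1 - rinner (‖ξ + ξs‖⁻¹ • (ξ + ξs)) σ) / 2) := by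
  set E := ‖ξ‖ ^ 2 + ‖ξs‖ ^ 2
  set u := rinner (‖ξ + ξs‖⁻¹ • (ξ + ξs)) σ
  rw [norm_postV_sq ξ ξs σ hσ, norm_postVs_sq ξ ξs σ hσ,
    show E * (1 + u) / 2 = E / 2 + E * u / 2 by ring,
    show E * (1 - u) / 2 = E / 2 - E * u / 2 by ring]
  refine hΦ.add_sub_le_add_sub_of_abs_le _ ?_
  have key := abs_inner_mul_norm_sub_le ξ ξs σ
  simp only [abs_mul, abs_div, abs_two, abs_norm, abs_of_nonneg (by positivity : 0 ≤ E)]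
  unfold u rinner
  linarith

theorem convex_povzner_bound_general
    (d : ℕ)
    (b : ℝ → ℝ) (hbnonneg : ∀ x, 0 ≤ b x)
    (Φ : ℝ → ℝ) (hΦ : ConvexOn ℝ Set.univ Φ)
    (ξ ξs : Vel d)
    (E : ℝ) (hE : E = ‖ξ‖ ^ 2 + ‖ξs‖ ^ 2)
    (uhat Uhat : Vel d)
    (hUhat : Uhat = ‖ξ + ξs‖⁻¹ • (ξ + ξs))
    (hint1 : Integrable (fun σ =>
      (Φ (‖postV d ξ ξs σ‖ ^ 2) + Φ (‖postVs d ξ ξs σ‖ ^ 2)) * b (rinner uhat σ))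
      (sphMeas d))
    (hint2 : Integrable (fun σ =>
      (Φ (E * (1 + rinner Uhat σ) / 2) + Φ (E * (1 - rinner Uhat σ) / 2))
        * b (rinner uhat σ)) (sphMeas d)) :
    (1 / 2) * (∫ σ, (Φ (‖postV d ξ ξs σ‖ ^ 2) + Φ (‖postVs d ξ ξs σ‖ ^ 2))
        * b (rinner uhat σ) ∂(sphMeas d))
      ≤ (1 / 2) * ∫ σ, (Φ (E * (1 + rinner Uhat σ) / 2)
          + Φ (E * (1 - rinner Uhat σ) / 2)) * b (rinner uhat σ) ∂(sphMeas d) := by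
  subst hE hUhat
  have hsphere : ∀ᵐ σ ∂(sphMeas d), σ ∈ sphere01 d :=
    ae_restrict_mem Metric.isClosed_sphere.measurableSet
  refine mul_le_mul_of_nonneg_left (integral_mono_ae hint1 hint2 ?_) (by norm_num)
  filter_upwards [hsphere] with σ hσ
  exact mul_le_mul_of_nonneg_right
    (povzner_integrand_le hΦ ξ ξs σ (mem_sphere_zero_iff_norm.mp hσ)) (hbnonneg _)

/-- **Lemma (Povzner-type bound for convex Φ):**
G_Φ(ξ,ξ*) = (1/2)∫_{S^{d−1}}[Φ(|ξ'|²)+Φ(|ξ'*|²)]b(û·σ)dσ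
 ≤ (1/2)∫_{S^{d−1}}[Φ(E(1+Û·σ)/2)+Φ(E(1−Û·σ)/2)]b(û·σ)dσ,
where E = |ξ|²+|ξ*|². -/
theorem convex_povzner_bound
    (d : ℕ) (hd : 2 ≤ d)
    (b : ℝ → ℝ) (hbnonneg : ∀ x, 0 ≤ b x)
    (Φ : ℝ → ℝ) (hΦ : ConvexOn ℝ Set.univ Φ)
    (ξ ξs : Vel d) (hne : ξ ≠ ξs) (hsum : ξ + ξs ≠ 0)
    (E : ℝ) (hE : E = ‖ξ‖ ^ 2 + ‖ξs‖ ^ 2)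
    (uhat Uhat : Vel d)
    (huhat : uhat = ‖ξ - ξs‖⁻¹ • (ξ - ξs))
    (hUhat : Uhat = ‖ξ + ξs‖⁻¹ • (ξ + ξs))
    (hint1 : Integrable (fun σ =>
      (Φ (‖postV d ξ ξs σ‖ ^ 2) + Φ (‖postVs d ξ ξs σ‖ ^ 2)) * b (rinner uhat σ))
      (sphMeas d))
    (hint2 : Integrable (fun σ =>
      (Φ (E * (1 + rinner Uhat σ) / 2) + Φ (E * (1 - rinner Uhat σ) / 2))
        * b (rinner uhat σ)) (sphMeas d)) :
    (1 / 2) * (∫ σ, (Φ (‖postV d ξ ξs σ‖ ^ 2) + Φ (‖postVs d ξ ξs σ‖ ^ 2))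
        * b (rinner uhat σ) ∂(sphMeas d))
      ≤ (1 / 2) * ∫ σ, (Φ (E * (1 + rinner Uhat σ) / 2)
          + Φ (E * (1 - rinner Uhat σ) / 2)) * b (rinner uhat σ) ∂(sphMeas d) :=
  convex_povzner_bound_general d b hbnonneg Φ hΦ ξ ξs E hE uhat Uhat hUhat hint1 hint2

end
end

section
/- Let f(ξ) = f̄(|ξ|) ≥ 0 be an isotropic (radially symmetric) integrable function on ℝ^d and let k : [0,∞) → [0,∞) be nondecreasing. Then for every ξ ∈ ℝ^d: ∫_{ℝ^d} f(ξ*) k(|ξ−ξ*|) dξ* ≥ (1/2) ∫_{ℝ^d} f(ξ*) k(√(|ξ|² + |ξ*|²)) dξ*. -/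
noncomputable section

open MeasureTheory Real Set Filter

/-
By the parallelogram law, √(|ξ|² + |ξ*|²) lies between |ξ - ξ*| and |ξ + ξ*|. Since k is
nondecreasing, f(ξ*) k(√(|ξ|² + |ξ*|²)) then lies between f(ξ*) k(|ξ - ξ*|) and f(ξ*) k(|ξ + ξ*|),
whatever the sign of f(ξ*), so its positive part is at most the sum of theirs. The reflection
ξ* ↦ -ξ* preserves Lebesgue measure and the isotropic f, and turns the second integral into the first.
-/

theorem MonotoneOn.measurable_comp {a : ℝ} {k : ℝ → ℝ} (hk : MonotoneOn k (Ici a))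
    {α : Type*} [MeasurableSpace α] {g : α → ℝ} (hg : Measurable g) (hga : ∀ x, a ≤ g x) :
    Measurable (k ∘ g) := by
  have hext : k ∘ g = IciExtend (fun t : Ici a => k t) ∘ g :=
    funext fun x => (IciExtend_of_mem (fun t : Ici a => k t) (hga x)).symm
  rw [hext]
  exact (monotoneOn_iff_monotone.mp hk).IciExtend.measurable.comp hg

theorem sqrt_norm_sq_add_norm_sq_mem_uIcc {E : Type*} [NormedAddCommGroup E]
    [InnerProductSpace ℝ E] (x y : E) :
    √(‖x‖ ^ 2 + ‖y‖ ^ 2) ∈ uIcc ‖x - y‖ ‖x + y‖ := by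
  have hpar : ‖x + y‖ ^ 2 + ‖x - y‖ ^ 2 = 2 * (‖x‖ ^ 2 + ‖y‖ ^ 2) := by
    simpa only [sq] using parallelogram_law_with_norm ℝ x y
  have hmin : min ‖x - y‖ ‖x + y‖ ≤ √(‖x‖ ^ 2 + ‖y‖ ^ 2) := by
    refine Real.le_sqrt_of_sq_le ?_
    rcases min_cases ‖x - y‖ ‖x + y‖ with ⟨h, hle⟩ | ⟨h, hlt⟩ <;> rw [h] <;>
      nlinarith [norm_nonneg (x - y), norm_nonneg (x + y)]
  have hmax : √(‖x‖ ^ 2 + ‖y‖ ^ 2) ≤ max ‖x - y‖ ‖x + y‖ := by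
    refine Real.sqrt_le_iff.mpr ⟨le_max_of_le_left (norm_nonneg _), ?_⟩
    rcases max_cases ‖x - y‖ ‖x + y‖ with ⟨h, hle⟩ | ⟨h, hlt⟩ <;> rw [h] <;>
      nlinarith [norm_nonneg (x - y), norm_nonneg (x + y)]
  exact ⟨hmin, hmax⟩

theorem ENNReal.ofReal_le_add_of_mem_uIcc {t u v : ℝ} (h : t ∈ uIcc u v) :
    ENNReal.ofReal t ≤ ENNReal.ofReal u + ENNReal.ofReal v :=
  calc ENNReal.ofReal t ≤ ENNReal.ofReal (max u v) := ENNReal.ofReal_le_ofReal h.2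
    _ = max (ENNReal.ofReal u) (ENNReal.ofReal v) := ENNReal.ofReal_max u v
    _ ≤ ENNReal.ofReal u + ENNReal.ofReal v := max_le_add_of_nonneg bot_le bot_le

theorem ofReal_mul_comp_sqrt_le_add {E : Type*} [NormedAddCommGroup E] [InnerProductSpace ℝ E]
    {k : ℝ → ℝ} (hk : MonotoneOn k (Ici 0)) (c : ℝ) (x y : E) :
    ENNReal.ofReal (c * k √(‖x‖ ^ 2 + ‖y‖ ^ 2))
      ≤ ENNReal.ofReal (c * k ‖x - y‖) + ENNReal.ofReal (c * k ‖x + y‖) := by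
  have hk' : MonotoneOn k (uIcc ‖x - y‖ ‖x + y‖) :=
    hk.mono fun t ht => (le_min (norm_nonneg _) (norm_nonneg _)).trans ht.1
  have hks := hk'.mapsTo_uIcc (sqrt_norm_sq_add_norm_sq_mem_uIcc x y)
  apply ENNReal.ofReal_le_add_of_mem_uIcc
  rw [← image_const_mul_uIcc]
  exact mem_image_of_mem _ hks

theorem half_lintegral_ofReal_mul_comp_sqrt_le {E : Type*} [NormedAddCommGroup E]
    [InnerProductSpace ℝ E] [MeasurableSpace E] [BorelSpace E] {μ : Measure E}
    [μ.IsNegInvariant] {f : E → ℝ} (hf : AEMeasurable f μ) (hf_even : ∀ y, f (-y) = f y)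
    {k : ℝ → ℝ} (hk : MonotoneOn k (Ici 0)) (x : E) :
    (1 / 2 : ENNReal) * ∫⁻ y, ENNReal.ofReal (f y * k √(‖x‖ ^ 2 + ‖y‖ ^ 2)) ∂μ
      ≤ ∫⁻ y, ENNReal.ofReal (f y * k ‖x - y‖) ∂μ := by
  set F := ∫⁻ y, ENNReal.ofReal (f y * k ‖x - y‖) ∂μ
  have hmeas : AEMeasurable (fun y => ENNReal.ofReal (f y * k ‖x - y‖)) μ :=
    ENNReal.measurable_ofReal.comp_aemeasurable <| hf.mul <|
      (hk.measurable_comp (continuous_const.sub continuous_id).norm.measurable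
        fun _ => norm_nonneg _).aemeasurable
  have hreflect : ∫⁻ y, ENNReal.ofReal (f y * k ‖x + y‖) ∂μ = F := by
    rw [← lintegral_neg_eq_self]
    simp only [hf_even, ← sub_eq_add_neg]
    rfl
  calc (1 / 2 : ENNReal) * ∫⁻ y, ENNReal.ofReal (f y * k √(‖x‖ ^ 2 + ‖y‖ ^ 2)) ∂μ
      ≤ (1 / 2) * ∫⁻ y, (ENNReal.ofReal (f y * k ‖x - y‖)
          + ENNReal.ofReal (f y * k ‖x + y‖)) ∂μ := by
        gcongr with y
        exact ofReal_mul_comp_sqrt_le_add hk (f y) x y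
    _ = (1 / 2) * (F + F) := by rw [lintegral_add_left' hmeas, hreflect]
    _ = F := by
        rw [← two_mul, ← mul_assoc, one_div,
          ENNReal.inv_mul_cancel two_ne_zero ENNReal.ofNat_ne_top, one_mul]

theorem isotropic_convolution_lower_bound_general
    (d : ℕ)
    (f : Vel d → ℝ)
    (hfint : Integrable f)
    (hiso : Isotropic d f)
    (k : ℝ → ℝ)
    (hkmono : MonotoneOn k (Ici 0)) :
    ∀ ξ : Vel d,
      (1 / 2 : ENNReal) *
          ∫⁻ ξs, ENNReal.ofReal (f ξs * k (Real.sqrt (‖ξ‖ ^ 2 + ‖ξs‖ ^ 2)))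
        ≤ ∫⁻ ξs, ENNReal.ofReal (f ξs * k ‖ξ - ξs‖) :=
  half_lintegral_ofReal_mul_comp_sqrt_le hfint.aemeasurable (fun y => hiso _ _ (norm_neg y)) hkmono

/-- **Lemma (lower bound for convolution-type integrals of isotropic functions):**
if f ≥ 0 is isotropic and integrable and k is nonnegative and nondecreasing on
[0,∞), then ∫f(ξ*)k(|ξ−ξ*|)dξ* ≥ (1/2)∫f(ξ*)k(√(|ξ|²+|ξ*|²))dξ*
(in the extended, nonnegative-integral sense). -/
theorem isotropic_convolution_lower_bound
    (d : ℕ) (hd : 2 ≤ d)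
    (f : Vel d → ℝ) (hf : ∀ ξ, 0 ≤ f ξ)
    (hfint : Integrable f)
    (hiso : Isotropic d f)
    (k : ℝ → ℝ) (hk0 : ∀ r : ℝ, 0 ≤ r → 0 ≤ k r)
    (hkmono : MonotoneOn k (Ici 0)) :
    ∀ ξ : Vel d,
      (1 / 2 : ENNReal) *
          ∫⁻ ξs, ENNReal.ofReal (f ξs * k (Real.sqrt (‖ξ‖ ^ 2 + ‖ξs‖ ^ 2)))
        ≤ ∫⁻ ξs, ENNReal.ofReal (f ξs * k ‖ξ - ξs‖) :=
  isotropic_convolution_lower_bound_general d f hfint hiso k hkmono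

end
end
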